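/- Let L be a many-sorted first-order language containing an equality predicate in each sort, let Eq be the axioms of equality for L, and let R be a polarized rewrite system in L. Then the theory ⟨R, Eq⟩ is compatible with the set of axioms U_R, where U_R consists of: the axioms of equality for L; for each equational axiom t = u of E, the universal closure of the proposition t = u; for each rule P → A of R₋, the universal closure of P ⇒ A; and for each rule P → A of R₊, the universal closure of A ⇒ P. -/

import Mathlib

namespace PDM

open Classical

noncomputable section

/-- A many-sorted first-order language. -/
structure Language : Type 1 where
  Sorts : Type
  Func : Type
  arity : Func → List Sorts
  ret : Func → Sorts
  Pred : Type
  parity : Pred → List Sorts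

variable {L : Language}

/-- Well-sorted terms, with (per-sort de Bruijn style) variables. -/
inductive Term (L : Language) : L.Sorts → Type where
  | var {s : L.Sorts} (n : ℕ) : Term L s
  | func (f : L.Func)
      (args : (i : Fin (L.arity f).length) → Term L ((L.arity f).get i)) :
      Term L (L.ret f)

def Term.rename (ρ : (s : L.Sorts) → ℕ → ℕ) :
    (s : L.Sorts) → Term L s → Term L s
  | s, .var n => .var (ρ s n)
  | _, .func f args => .func f fun i => Term.rename ρ _ (args i)

def Term.subst (σ : (s : L.Sorts) → ℕ → Term L s) :
    (s : L.Sorts) → Term L s → Term L s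
  | s, .var n => σ s n
  | _, .func f args => .func f fun i => Term.subst σ _ (args i)

/-- Shift up the variables of sort `s₀`. -/
def shiftRen (s₀ : L.Sorts) : (s : L.Sorts) → ℕ → ℕ :=
  fun s n => if s = s₀ then n + 1 else n

/-- Push a renaming under a binder of sort `s₀`. -/
def liftRen (s₀ : L.Sorts) (ρ : (s : L.Sorts) → ℕ → ℕ) : (s : L.Sorts) → ℕ → ℕ :=
  fun s n =>
    if s = s₀ then
      match n with
      | 0 => 0
      | n + 1 => ρ s n + 1
    else ρ s n

/-- Push a substitution under a binder of sort `s₀`. -/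
def liftSubst (s₀ : L.Sorts) (σ : (s : L.Sorts) → ℕ → Term L s) :
    (s : L.Sorts) → ℕ → Term L s :=
  fun s n =>
    if s = s₀ then
      match n with
      | 0 => .var 0
      | n + 1 => Term.rename (shiftRen s₀) s (σ s n)
    else Term.rename (shiftRen s₀) s (σ s n)

/-- First-order propositions over `L`. -/
inductive Form (L : Language) : Type where
  | pred (p : L.Pred)
      (args : (i : Fin (L.parity p).length) → Term L ((L.parity p).get i)) : Form L
  | bot : Form L
  | top : Form L
  | not (A : Form L) : Form L
  | and (A B : Form L) : Form L
  | or (A B : Form L) : Form L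
  | imp (A B : Form L) : Form L
  | all (s : L.Sorts) (A : Form L) : Form L
  | ex (s : L.Sorts) (A : Form L) : Form L

def Form.rename : ((s : L.Sorts) → ℕ → ℕ) → Form L → Form L
  | ρ, .pred p args => .pred p fun i => Term.rename ρ _ (args i)
  | _, .bot => .bot
  | _, .top => .top
  | ρ, .not A => .not (Form.rename ρ A)
  | ρ, .and A B => .and (Form.rename ρ A) (Form.rename ρ B)
  | ρ, .or A B => .or (Form.rename ρ A) (Form.rename ρ B)
  | ρ, .imp A B => .imp (Form.rename ρ A) (Form.rename ρ B)
  | ρ, .all s A => .all s (Form.rename (liftRen s ρ) A)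
  | ρ, .ex s A => .ex s (Form.rename (liftRen s ρ) A)

def Form.subst : ((s : L.Sorts) → ℕ → Term L s) → Form L → Form L
  | σ, .pred p args => .pred p fun i => Term.subst σ _ (args i)
  | _, .bot => .bot
  | _, .top => .top
  | σ, .not A => .not (Form.subst σ A)
  | σ, .and A B => .and (Form.subst σ A) (Form.subst σ B)
  | σ, .or A B => .or (Form.subst σ A) (Form.subst σ B)
  | σ, .imp A B => .imp (Form.subst σ A) (Form.subst σ B)
  | σ, .all s A => .all s (Form.subst (liftSubst s σ) A)
  | σ, .ex s A => .ex s (Form.subst (liftSubst s σ) A)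

/-- Shift up the free variables of sort `s₀` in a proposition. -/
def Form.shift (s₀ : L.Sorts) (A : Form L) : Form L :=
  Form.rename (shiftRen s₀) A

/-- The substitution replacing the free variable `0` of sort `s` by `t`
(and shifting the other variables of sort `s` down). -/
def subst0 {s : L.Sorts} (t : Term L s) : (s' : L.Sorts) → ℕ → Term L s' :=
  fun s' n =>
    if h : s = s' then
      match n with
      | 0 => h ▸ t
      | n + 1 => .var n
    else .var n

/-- Instantiation of the body of a quantifier over sort `s` with a term `t`. -/
def Form.inst {s : L.Sorts} (t : Term L s) (A : Form L) : Form L :=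
  Form.subst (subst0 t) A

def Form.IsAtomic : Form L → Prop
  | .pred _ _ => True
  | _ => False

/-- A polarized rewrite system: equations between terms, and negative and
positive proposition rewrite rules whose left-hand sides are atomic. -/
structure PRS (L : Language) : Type 1 where
  eqns : (s : L.Sorts) → Term L s → Term L s → Prop
  neg : Form L → Form L → Prop
  pos : Form L → Form L → Prop
  neg_atomic : ∀ {P A : Form L}, neg P A → P.IsAtomic
  pos_atomic : ∀ {P A : Form L}, pos P A → P.IsAtomic

/-- The congruence on terms generated by the equations. -/
inductive EqE (rs : PRS L) : (s : L.Sorts) → Term L s → Term L s → Prop where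
  | base {s : L.Sorts} {t u : Term L s} (σ : (s : L.Sorts) → ℕ → Term L s) :
      rs.eqns s t u → EqE rs s (Term.subst σ s t) (Term.subst σ s u)
  | refl {s : L.Sorts} (t : Term L s) : EqE rs s t t
  | symm {s : L.Sorts} {t u : Term L s} : EqE rs s t u → EqE rs s u t
  | trans {s : L.Sorts} {t u v : Term L s} :
      EqE rs s t u → EqE rs s u v → EqE rs s t v
  | congr (f : L.Func)
      {args args' : (i : Fin (L.arity f).length) → Term L ((L.arity f).get i)}
      (h : ∀ i, EqE rs _ (args i) (args' i)) :
      EqE rs (L.ret f) (.func f args) (.func f args')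

mutual
  /-- One step negative rewriting. -/
  inductive RwNeg (rs : PRS L) : Form L → Form L → Prop where
    | predArg (p : L.Pred)
        (args args' : (i : Fin (L.parity p).length) → Term L ((L.parity p).get i))
        (i : Fin (L.parity p).length) :
        EqE rs _ (args i) (args' i) → (∀ j, j ≠ i → args j = args' j) →
        RwNeg rs (.pred p args) (.pred p args')
    | rule {P A : Form L} (σ : (s : L.Sorts) → ℕ → Term L s) :
        rs.neg P A → RwNeg rs (Form.subst σ P) (Form.subst σ A)
    | notC {A A' : Form L} : RwPos rs A A' → RwNeg rs (.not A) (.not A')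
    | andL {A A' B : Form L} : RwNeg rs A A' → RwNeg rs (.and A B) (.and A' B)
    | andR {A B B' : Form L} : RwNeg rs B B' → RwNeg rs (.and A B) (.and A B')
    | orL {A A' B : Form L} : RwNeg rs A A' → RwNeg rs (.or A B) (.or A' B)
    | orR {A B B' : Form L} : RwNeg rs B B' → RwNeg rs (.or A B) (.or A B')
    | impL {A A' B : Form L} : RwPos rs A A' → RwNeg rs (.imp A B) (.imp A' B)
    | impR {A B B' : Form L} : RwNeg rs B B' → RwNeg rs (.imp A B) (.imp A B')
    | allC {s : L.Sorts} {A A' : Form L} :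
        RwNeg rs A A' → RwNeg rs (.all s A) (.all s A')
    | exC {s : L.Sorts} {A A' : Form L} :
        RwNeg rs A A' → RwNeg rs (.ex s A) (.ex s A')
  /-- One step positive rewriting. -/
  inductive RwPos (rs : PRS L) : Form L → Form L → Prop where
    | predArg (p : L.Pred)
        (args args' : (i : Fin (L.parity p).length) → Term L ((L.parity p).get i))
        (i : Fin (L.parity p).length) :
        EqE rs _ (args i) (args' i) → (∀ j, j ≠ i → args j = args' j) →
        RwPos rs (.pred p args) (.pred p args')
    | rule {P A : Form L} (σ : (s : L.Sorts) → ℕ → Term L s) :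
        rs.pos P A → RwPos rs (Form.subst σ P) (Form.subst σ A)
    | notC {A A' : Form L} : RwNeg rs A A' → RwPos rs (.not A) (.not A')
    | andL {A A' B : Form L} : RwPos rs A A' → RwPos rs (.and A B) (.and A' B)
    | andR {A B B' : Form L} : RwPos rs B B' → RwPos rs (.and A B) (.and A B')
    | orL {A A' B : Form L} : RwPos rs A A' → RwPos rs (.or A B) (.or A' B)
    | orR {A B B' : Form L} : RwPos rs B B' → RwPos rs (.or A B) (.or A B')
    | impL {A A' B : Form L} : RwNeg rs A A' → RwPos rs (.imp A B) (.imp A' B)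
    | impR {A B B' : Form L} : RwPos rs B B' → RwPos rs (.imp A B) (.imp A B')
    | allC {s : L.Sorts} {A A' : Form L} :
        RwPos rs A A' → RwPos rs (.all s A) (.all s A')
    | exC {s : L.Sorts} {A A' : Form L} :
        RwPos rs A A' → RwPos rs (.ex s A) (.ex s A')
end

/-- Reflexive-transitive closure of negative rewriting: `A →₋* B`. -/
def RwNegS (rs : PRS L) : Form L → Form L → Prop := Relation.ReflTransGen (RwNeg rs)

/-- Reflexive-transitive closure of positive rewriting: `A →₊* B`. -/
def RwPosS (rs : PRS L) : Form L → Form L → Prop := Relation.ReflTransGen (RwPos rs)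

/-- One step rewriting of sequents. -/
inductive SeqRw (rs : PRS L) :
    Multiset (Form L) × Multiset (Form L) → Multiset (Form L) × Multiset (Form L) →
    Prop where
  | left {Γ Δ : Multiset (Form L)} {A A' : Form L} :
      RwNeg rs A A' → SeqRw rs (A ::ₘ Γ, Δ) (A' ::ₘ Γ, Δ)
  | right {Γ Δ : Multiset (Form L)} {A A' : Form L} :
      RwPos rs A A' → SeqRw rs (Γ, A ::ₘ Δ) (Γ, A' ::ₘ Δ)
/-- Polarized sequent calculus modulo `rs`.  `Pf rs useCut n Γ Δ` means that the
sequent `Γ ⊢ Δ` has a proof of size `n`, using the cut rule only if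
`useCut = true`. -/
inductive Pf (rs : PRS L) (useCut : Bool) :
    ℕ → Multiset (Form L) → Multiset (Form L) → Prop where
  | ax {A B P : Form L} :
      Form.IsAtomic P → RwNegS rs A P → RwPosS rs B P →
      Pf rs useCut 1 {A} {B}
  | cut {Γ Δ : Multiset (Form L)} {A B C : Form L} {n m : ℕ} :
      useCut = true → RwNegS rs A B → RwPosS rs A C →
      Pf rs useCut n (B ::ₘ Γ) Δ → Pf rs useCut m Γ (C ::ₘ Δ) →
      Pf rs useCut (n + m + 1) Γ Δ
  | contrL {Γ Δ : Multiset (Form L)} {A B C : Form L} {n : ℕ} :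
      RwNegS rs A B → RwNegS rs A C →
      Pf rs useCut n (B ::ₘ C ::ₘ Γ) Δ → Pf rs useCut (n + 1) (A ::ₘ Γ) Δ
  | contrR {Γ Δ : Multiset (Form L)} {A B C : Form L} {n : ℕ} :
      RwPosS rs A B → RwPosS rs A C →
      Pf rs useCut n Γ (B ::ₘ C ::ₘ Δ) → Pf rs useCut (n + 1) Γ (A ::ₘ Δ)
  | weakL {Γ Δ : Multiset (Form L)} {A : Form L} {n : ℕ} :
      Pf rs useCut n Γ Δ → Pf rs useCut (n + 1) (A ::ₘ Γ) Δ
  | weakR {Γ Δ : Multiset (Form L)} {A : Form L} {n : ℕ} :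
      Pf rs useCut n Γ Δ → Pf rs useCut (n + 1) Γ (A ::ₘ Δ)
  | topR {Γ Δ : Multiset (Form L)} {A : Form L} :
      RwPosS rs A .top → Pf rs useCut 1 Γ (A ::ₘ Δ)
  | botL {Γ Δ : Multiset (Form L)} {A : Form L} :
      RwNegS rs A .bot → Pf rs useCut 1 (A ::ₘ Γ) Δ
  | notL {Γ Δ : Multiset (Form L)} {A B : Form L} {n : ℕ} :
      RwNegS rs A (.not B) →
      Pf rs useCut n Γ (B ::ₘ Δ) → Pf rs useCut (n + 1) (A ::ₘ Γ) Δ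
  | notR {Γ Δ : Multiset (Form L)} {A B : Form L} {n : ℕ} :
      RwPosS rs A (.not B) →
      Pf rs useCut n (B ::ₘ Γ) Δ → Pf rs useCut (n + 1) Γ (A ::ₘ Δ)
  | andL {Γ Δ : Multiset (Form L)} {A B C : Form L} {n : ℕ} :
      RwNegS rs A (.and B C) →
      Pf rs useCut n (B ::ₘ C ::ₘ Γ) Δ → Pf rs useCut (n + 1) (A ::ₘ Γ) Δ
  | andR {Γ Δ : Multiset (Form L)} {A B C : Form L} {n m : ℕ} :
      RwPosS rs A (.and B C) →
      Pf rs useCut n Γ (B ::ₘ Δ) → Pf rs useCut m Γ (C ::ₘ Δ) →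
      Pf rs useCut (n + m + 1) Γ (A ::ₘ Δ)
  | orL {Γ Δ : Multiset (Form L)} {A B C : Form L} {n m : ℕ} :
      RwNegS rs A (.or B C) →
      Pf rs useCut n (B ::ₘ Γ) Δ → Pf rs useCut m (C ::ₘ Γ) Δ →
      Pf rs useCut (n + m + 1) (A ::ₘ Γ) Δ
  | orR {Γ Δ : Multiset (Form L)} {A B C : Form L} {n : ℕ} :
      RwPosS rs A (.or B C) →
      Pf rs useCut n Γ (B ::ₘ C ::ₘ Δ) → Pf rs useCut (n + 1) Γ (A ::ₘ Δ)
  | impL {Γ Δ : Multiset (Form L)} {A B C : Form L} {n m : ℕ} :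
      RwNegS rs A (.imp B C) →
      Pf rs useCut n Γ (B ::ₘ Δ) → Pf rs useCut m (C ::ₘ Γ) Δ →
      Pf rs useCut (n + m + 1) (A ::ₘ Γ) Δ
  | impR {Γ Δ : Multiset (Form L)} {A B C : Form L} {n : ℕ} :
      RwPosS rs A (.imp B C) →
      Pf rs useCut n (B ::ₘ Γ) (C ::ₘ Δ) → Pf rs useCut (n + 1) Γ (A ::ₘ Δ)
  | allL {Γ Δ : Multiset (Form L)} {s : L.Sorts} {t : Term L s} {A B C : Form L}
      {n : ℕ} :
      RwNegS rs A (.all s B) → RwNegS rs (Form.inst t B) C →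
      Pf rs useCut n (C ::ₘ Γ) Δ → Pf rs useCut (n + 1) (A ::ₘ Γ) Δ
  | allR {Γ Δ : Multiset (Form L)} {s : L.Sorts} {A B : Form L} {n : ℕ} :
      RwPosS rs A (.all s B) →
      Pf rs useCut n (Γ.map (Form.shift s)) (B ::ₘ Δ.map (Form.shift s)) →
      Pf rs useCut (n + 1) Γ (A ::ₘ Δ)
  | exL {Γ Δ : Multiset (Form L)} {s : L.Sorts} {A B : Form L} {n : ℕ} :
      RwNegS rs A (.ex s B) →
      Pf rs useCut n (B ::ₘ Γ.map (Form.shift s)) (Δ.map (Form.shift s)) →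
      Pf rs useCut (n + 1) (A ::ₘ Γ) Δ
  | exR {Γ Δ : Multiset (Form L)} {s : L.Sorts} {t : Term L s} {A B C : Form L}
      {n : ℕ} :
      RwPosS rs A (.ex s B) → RwPosS rs (Form.inst t B) C →
      Pf rs useCut n Γ (C ::ₘ Δ) → Pf rs useCut (n + 1) Γ (A ::ₘ Δ)

/-- The sequent `Γ ⊢ Δ` is provable modulo `rs`. -/
def Provable (rs : PRS L) (Γ Δ : Multiset (Form L)) : Prop :=
  ∃ n, Pf rs true n Γ Δ

/-- The sequent `Γ ⊢ Δ` has a cut free proof modulo `rs`. -/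
def CutFreeProvable (rs : PRS L) (Γ Δ : Multiset (Form L)) : Prop :=
  ∃ n, Pf rs false n Γ Δ

/-- The sequent `Γ ⊢ Δ` is provable in the set of axioms `T` modulo `rs`:
some finite multiset of axioms of `T` can be added on the left. -/
def ProvableIn (rs : PRS L) (T : Set (Form L)) (Γ Δ : Multiset (Form L)) : Prop :=
  ∃ T' : Multiset (Form L), (∀ A ∈ T', A ∈ T) ∧ Provable rs (Γ + T') Δ

/-- The empty rewrite system; provability modulo it is ordinary provability in
classical first-order predicate logic. -/
def emptyPRS (L : Language) : PRS L where
  eqns := fun _ _ _ => False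
  neg := fun _ _ => False
  pos := fun _ _ => False
  neg_atomic := fun h => h.elim
  pos_atomic := fun h => h.elim

/-- Provability in predicate logic from a set of axioms `U`. -/
def PLProvableIn (U : Set (Form L)) (Γ Δ : Multiset (Form L)) : Prop :=
  ProvableIn (emptyPRS L) U Γ Δ

/-- Compatibility of the theory `⟨rs, T⟩` with the set of axioms `U`. -/
structure Compatible (rs : PRS L) (T U : Set (Form L)) : Prop where
  rwNeg : ∀ A B : Form L, RwNegS rs A B → PLProvableIn U 0 {Form.imp A B}
  rwPos : ∀ A B : Form L, RwPosS rs A B → PLProvableIn U 0 {Form.imp B A}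
  axT : ∀ A ∈ T, PLProvableIn U 0 {A}
  axU : ∀ A ∈ U, ProvableIn rs T 0 {A}
/-- The list of (sort, index) free variables of a term. -/
def Term.freeList : (s : L.Sorts) → Term L s → List ((s : L.Sorts) × ℕ)
  | s, .var n => [⟨s, n⟩]
  | _, .func f args =>
      (List.finRange (L.arity f).length).flatMap fun i => Term.freeList _ (args i)

/-- Adjusting a list of free variables when leaving a binder of sort `s`. -/
def unbind (s : L.Sorts) (l : List ((s : L.Sorts) × ℕ)) :
    List ((s : L.Sorts) × ℕ) :=
  (l.filter fun v => decide ¬(v.1 = s ∧ v.2 = 0)).map fun v =>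
    if v.1 = s then ⟨v.1, v.2 - 1⟩ else v

/-- The list of (sort, index) free variables of a proposition. -/
def Form.freeList : Form L → List ((s : L.Sorts) × ℕ)
  | .pred p args =>
      (List.finRange (L.parity p).length).flatMap fun i => Term.freeList _ (args i)
  | .bot => []
  | .top => []
  | .not A => A.freeList
  | .and A B => A.freeList ++ B.freeList
  | .or A B => A.freeList ++ B.freeList
  | .imp A B => A.freeList ++ B.freeList
  | .all s A => unbind s A.freeList
  | .ex s A => unbind s A.freeList

/-- Universally quantify over the free variable `k` of sort `s`. -/
def Form.abstractVar (s : L.Sorts) (k : ℕ) (A : Form L) : Form L :=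
  .all s (A.subst fun s' n =>
    if s' = s then (if n = k then .var 0 else .var (n + 1)) else .var n)

def closeSteps : ℕ → Form L → Form L
  | 0, A => A
  | n + 1, A =>
    match A.freeList with
    | [] => A
    | v :: _ => closeSteps n (A.abstractVar v.1 v.2)

/-- The universal closure of a proposition. -/
def univClosure (A : Form L) : Form L := closeSteps A.freeList.length A

/-- The set of axioms `A_R` associated with a polarized rewrite system. -/
def axSetAR (rs : PRS L) : Set (Form L) :=
  {C | ∃ A B : Form L, RwNegS rs A B ∧ C = univClosure (A.imp B)} ∪
  {C | ∃ A B : Form L, RwPosS rs A B ∧ C = univClosure (B.imp A)}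

/-- A (many-sorted, classical) first-order model of the language `L`. -/
structure Model (L : Language) : Type 1 where
  dom : L.Sorts → Type
  inhab : ∀ s, Nonempty (dom s)
  interpF : (f : L.Func) →
      ((i : Fin (L.arity f).length) → dom ((L.arity f).get i)) → dom (L.ret f)
  interpP : (p : L.Pred) →
      ((i : Fin (L.parity p).length) → dom ((L.parity p).get i)) → Prop

/-- Valuations of the variables in a model. -/
def Model.Val (M : Model L) : Type := (s : L.Sorts) → ℕ → M.dom s

/-- Denotation of terms. -/
def Model.evalT (M : Model L) (φ : M.Val) : (s : L.Sorts) → Term L s → M.dom s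
  | s, .var n => φ s n
  | _, .func f args => M.interpF f fun i => M.evalT φ _ (args i)

/-- Pushing a new value for the variable `0` of sort `s` into a valuation. -/
def Model.push (M : Model L) (φ : M.Val) {s : L.Sorts} (d : M.dom s) : M.Val :=
  fun s' n =>
    if h : s = s' then
      match n with
      | 0 => h ▸ d
      | n + 1 => φ s' n
    else φ s' n

/-- Denotation (truth value) of propositions. -/
def Model.evalF (M : Model L) : M.Val → Form L → Prop
  | φ, .pred p args => M.interpP p fun i => M.evalT φ _ (args i)
  | _, .bot => False
  | _, .top => True
  | φ, .not A => ¬ M.evalF φ A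
  | φ, .and A B => M.evalF φ A ∧ M.evalF φ B
  | φ, .or A B => M.evalF φ A ∨ M.evalF φ B
  | φ, .imp A B => M.evalF φ A → M.evalF φ B
  | φ, .all s A => ∀ d : M.dom s, M.evalF (M.push φ d) A
  | φ, .ex s A => ∃ d : M.dom s, M.evalF (M.push φ d) A

/-- A proposition is valid in a model. -/
def Model.ValidForm (M : Model L) (A : Form L) : Prop := ∀ φ : M.Val, M.evalF φ A

/-- A sequent is valid in a model. -/
def Model.ValidSeq (M : Model L) (Γ Δ : Multiset (Form L)) : Prop :=
  ∀ φ : M.Val, (∀ A ∈ Γ, M.evalF φ A) → ∃ B ∈ Δ, M.evalF φ B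

/-- `M` is a model of a set of axioms. -/
def IsModelOf (M : Model L) (S : Set (Form L)) : Prop := ∀ A ∈ S, M.ValidForm A

/-- `M` is a model of the theory `⟨rs, T⟩`, i.e. a model of `A_R ∪ T`. -/
def IsModelOfTheory (M : Model L) (rs : PRS L) (T : Set (Form L)) : Prop :=
  IsModelOf M (axSetAR rs ∪ T)

/-- An equality model: terms congruent modulo `=_E` have the same denotation. -/
def IsEqualityModel (M : Model L) (rs : PRS L) : Prop :=
  ∀ (s : L.Sorts) (t u : Term L s), EqE rs s t u →
    ∀ φ : M.Val, M.evalT φ s t = M.evalT φ s u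

/-- The relation `∼` on a domain of a model: being denotations of two
`=_E`-congruent terms. -/
def simRel (rs : PRS L) (M : Model L) (s : L.Sorts) (a b : M.dom s) : Prop :=
  ∃ (t u : Term L s) (φ : M.Val),
    EqE rs s t u ∧ a = M.evalT φ s t ∧ b = M.evalT φ s u

/-- A literal: an atomic proposition or the negation of an atomic one. -/
def Form.IsLiteral (A : Form L) : Prop :=
  A.IsAtomic ∨ ∃ B : Form L, B.IsAtomic ∧ A = .not B

/-- Disjunctions of literals. -/
inductive IsDisj : Form L → Prop where
  | lit {A : Form L} : A.IsLiteral → IsDisj A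
  | or {A B : Form L} : IsDisj A → IsDisj B → IsDisj (.or A B)

/-- Universally quantified disjunctions of literals. -/
inductive IsQuantClause : Form L → Prop where
  | disj {A : Form L} : IsDisj A → IsQuantClause A
  | all {s : L.Sorts} {A : Form L} : IsQuantClause A → IsQuantClause (.all s A)

/-- A clausal proposition: `⊥` or `∀x₁…∀xₚ (L₁ ∨ … ∨ Lₙ)`. -/
def Form.IsClausal (A : Form L) : Prop := A = .bot ∨ IsQuantClause A

/-- A clausal polarized rewrite system. -/
def IsClausalSystem (rs : PRS L) : Prop :=
  (∀ P A : Form L, rs.neg P A → P.IsAtomic ∧ A.IsClausal) ∧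
  (∀ P A : Form L, rs.pos P A → P.IsAtomic ∧ ∃ B : Form L, B.IsClausal ∧ A = .not B)
/-- The language obtained by adding an equality predicate in each sort. -/
def withEq (L : Language) : Language where
  Sorts := L.Sorts
  Func := L.Func
  arity := L.arity
  ret := L.ret
  Pred := L.Pred ⊕ L.Sorts
  parity := fun p =>
    match p with
    | .inl p => L.parity p
    | .inr s => [s, s]

/-- The canonical embedding of terms of `L` into `withEq L`. -/
def Term.toEq : (s : L.Sorts) → Term L s → Term (withEq L) s
  | _, .var n => .var n
  | _, .func f args =>
      Term.func (L := withEq L) f fun i => Term.toEq _ (args i)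

/-- The canonical embedding of propositions of `L` into `withEq L`. -/
def Form.toEq : Form L → Form (withEq L)
  | .pred p args => Form.pred (L := withEq L) (.inl p) fun i => Term.toEq (L := L) _ (args i)
  | .bot => .bot
  | .top => .top
  | .not A => .not A.toEq
  | .and A B => .and A.toEq B.toEq
  | .or A B => .or A.toEq B.toEq
  | .imp A B => .imp A.toEq B.toEq
  | .all s A => .all s A.toEq
  | .ex s A => .ex s A.toEq

/-- The rewrite system `rs` viewed as a rewrite system of `withEq L`. -/
def PRS.toEq (rs : PRS L) : PRS (withEq L) where
  eqns := fun s t u =>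
    ∃ t₀ u₀ : Term L s, rs.eqns s t₀ u₀ ∧ t = Term.toEq (L := L) s t₀ ∧ u = Term.toEq (L := L) s u₀
  neg := fun P A => ∃ P₀ A₀ : Form L, rs.neg P₀ A₀ ∧ P = P₀.toEq ∧ A = A₀.toEq
  pos := fun P A => ∃ P₀ A₀ : Form L, rs.pos P₀ A₀ ∧ P = P₀.toEq ∧ A = A₀.toEq
  neg_atomic := by
    rintro P A ⟨P₀, A₀, h, rfl, rfl⟩
    have h' := rs.neg_atomic h
    cases P₀ <;> simp_all [Form.IsAtomic, Form.toEq]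
  pos_atomic := by
    rintro P A ⟨P₀, A₀, h, rfl, rfl⟩
    have h' := rs.pos_atomic h
    cases P₀ <;> simp_all [Form.IsAtomic, Form.toEq]

/-- A two-element family of arguments. -/
def args2 {L' : Language} {s₁ s₂ : L'.Sorts} (t : Term L' s₁) (u : Term L' s₂) :
    (i : Fin ([s₁, s₂] : List L'.Sorts).length) →
      Term L' (([s₁, s₂] : List L'.Sorts).get i)
  | ⟨0, _⟩ => t
  | ⟨1, _⟩ => u

/-- A one-element family of arguments. -/
def args1 {L' : Language} {s : L'.Sorts} (t : Term L' s) :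
    (i : Fin ([s] : List L'.Sorts).length) → Term L' (([s] : List L'.Sorts).get i)
  | ⟨0, _⟩ => t

/-- The proposition `t = u` in `withEq L`. -/
def eqForm {s : L.Sorts} (t u : Term (withEq L) s) : Form (withEq L) :=
  .pred (.inr s) (args2 t u)

/-- Hypothesis `x₁ = y₁ ∧ … ∧ xₙ = yₙ` for the congruence axiom of a function
symbol, where `xᵢ` is the variable `2i` and `yᵢ` the variable `2i+1`. -/
def congrHypF (f : L.Func) : Form (withEq L) :=
  (List.finRange (L.arity f).length).foldr
    (fun i C => .and (eqForm (s := (L.arity f).get i)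
      (.var (2 * i.val)) (.var (2 * i.val + 1))) C) .top

/-- The congruence axiom for a function symbol. -/
def funcCongrAx (f : L.Func) : Form (withEq L) :=
  univClosure ((congrHypF f).imp
    (eqForm (Term.func (L := withEq L) f fun i => .var (2 * i.val))
            (Term.func (L := withEq L) f fun i => .var (2 * i.val + 1))))

/-- Hypothesis for the congruence axiom of a predicate symbol of `withEq L`. -/
def congrHypP (p : (withEq L).Pred) : Form (withEq L) :=
  (List.finRange ((withEq L).parity p).length).foldr
    (fun i C => .and (eqForm (s := ((withEq L).parity p).get i)
      (.var (2 * i.val)) (.var (2 * i.val + 1))) C) .top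

/-- The congruence (Leibniz) axiom for a predicate symbol. -/
def predCongrAx (p : (withEq L).Pred) : Form (withEq L) :=
  univClosure ((congrHypP p).imp
    ((Form.pred p fun i => .var (2 * i.val)).imp
      (Form.pred p fun i => .var (2 * i.val + 1))))

/-- The axioms of equality for the language `withEq L`. -/
def EqAxioms (L : Language) : Set (Form (withEq L)) :=
  {C | ∃ s : L.Sorts,
      C = univClosure (eqForm (s := s) (.var 0) (.var 0))} ∪
  {C | ∃ s : L.Sorts,
      C = univClosure ((eqForm (s := s) (.var 0) (.var 1)).imp
        (eqForm (s := s) (.var 1) (.var 0)))} ∪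
  {C | ∃ s : L.Sorts,
      C = univClosure ((Form.and (eqForm (s := s) (.var 0) (.var 1))
        (eqForm (s := s) (.var 1) (.var 2))).imp
          (eqForm (s := s) (.var 0) (.var 2)))} ∪
  {C | ∃ f : L.Func, C = funcCongrAx f} ∪
  {C | ∃ p : (withEq L).Pred, C = predCongrAx p}

/-- The set of axioms `U_R` associated with a polarized rewrite system over a
language with equality. -/
def URset {L₀ : Language} (rs : PRS (withEq L₀)) : Set (Form (withEq L₀)) :=
  EqAxioms L₀ ∪
  {C | ∃ (s : L₀.Sorts) (t u : Term (withEq L₀) s),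
      rs.eqns s t u ∧ C = univClosure (eqForm t u)} ∪
  {C | ∃ P A : Form (withEq L₀), rs.neg P A ∧ C = univClosure (P.imp A)} ∪
  {C | ∃ P A : Form (withEq L₀), rs.pos P A ∧ C = univClosure (A.imp P)}
/-! ### Simple Type Theory: the theories HOL and HOL± -/

/-- Simple types. -/
inductive STy : Type where
  | iota : STy
  | o : STy
  | arr (T U : STy) : STy

/-- The function symbols of HOL. -/
inductive HFunc : Type where
  | K (T U : STy) : HFunc
  | S (T U V : STy) : HFunc
  | dor : HFunc
  | dnot : HFunc
  | dall (T : STy) : HFunc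
  | zero : HFunc
  | succ : HFunc
  | pred : HFunc
  | null : HFunc
  | app (T U : STy) : HFunc

def HFunc.arity : HFunc → List STy
  | .app T U => [.arr T U, T]
  | _ => []

def HFunc.ret : HFunc → STy
  | .K T U => .arr T (.arr U T)
  | .S T U V => .arr (.arr T (.arr U V)) (.arr (.arr T U) (.arr T V))
  | .dor => .arr .o (.arr .o .o)
  | .dnot => .arr .o .o
  | .dall T => .arr (.arr T .o) .o
  | .zero => .iota
  | .succ => .arr .iota .iota
  | .pred => .arr .iota .iota
  | .null => .arr .iota .o
  | .app _ U => U

/-- The language of HOL: sorts are simple types, and `ε` is the unique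
predicate symbol, of rank `⟨o⟩`. -/
def LHOL : Language where
  Sorts := STy
  Func := HFunc
  arity := HFunc.arity
  ret := HFunc.ret
  Pred := Unit
  parity := fun _ => [STy.o]

/-- The language of HOL±: that of HOL plus a symbol `H_T` of sort
`(T → o) → T` for each sort `T`. -/
def LHOLpm : Language where
  Sorts := STy
  Func := HFunc ⊕ STy
  arity := fun f =>
    match f with
    | .inl f => f.arity
    | .inr T => [STy.arr T STy.o]
  ret := fun f =>
    match f with
    | .inl f => f.ret
    | .inr T => T
  Pred := Unit
  parity := fun _ => [STy.o]

/-- Application in HOL. -/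
def hap {T U : STy} (t : Term LHOL (STy.arr T U)) (u : Term LHOL T) :
    Term LHOL U :=
  Term.func (L := LHOL) (HFunc.app T U) (args2 (L' := LHOL) t u)

/-- Application in HOL±. -/
def pap {T U : STy} (t : Term LHOLpm (STy.arr T U)) (u : Term LHOLpm T) :
    Term LHOLpm U :=
  Term.func (L := LHOLpm) (Sum.inl (HFunc.app T U)) (args2 (L' := LHOLpm) t u)

/-- The Hilbert symbol `H_T` applied to a term, in HOL±. -/
def hH (T : STy) (t : Term LHOLpm (STy.arr T STy.o)) : Term LHOLpm T :=
  Term.func (L := LHOLpm) (Sum.inr T) (args1 (L' := LHOLpm) t)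

/-- The constants of HOL. -/
def hK (T U : STy) : Term LHOL (HFunc.ret (.K T U)) :=
  Term.func (L := LHOL) (HFunc.K T U) finZeroElim
def hS (T U V : STy) : Term LHOL (HFunc.ret (.S T U V)) :=
  Term.func (L := LHOL) (HFunc.S T U V) finZeroElim
def hOr : Term LHOL (HFunc.ret .dor) :=
  Term.func (L := LHOL) HFunc.dor finZeroElim
def hNot : Term LHOL (HFunc.ret .dnot) :=
  Term.func (L := LHOL) HFunc.dnot finZeroElim
def hAll (T : STy) : Term LHOL (HFunc.ret (.dall T)) :=
  Term.func (L := LHOL) (HFunc.dall T) finZeroElim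
def hZero : Term LHOL (HFunc.ret .zero) :=
  Term.func (L := LHOL) HFunc.zero finZeroElim
def hSucc : Term LHOL (HFunc.ret .succ) :=
  Term.func (L := LHOL) HFunc.succ finZeroElim
def hPred : Term LHOL (HFunc.ret .pred) :=
  Term.func (L := LHOL) HFunc.pred finZeroElim
def hNull : Term LHOL (HFunc.ret .null) :=
  Term.func (L := LHOL) HFunc.null finZeroElim

/-- The constants of HOL±. -/
def pK (T U : STy) : Term LHOLpm (HFunc.ret (.K T U)) :=
  Term.func (L := LHOLpm) (Sum.inl (HFunc.K T U)) finZeroElim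
def pS (T U V : STy) : Term LHOLpm (HFunc.ret (.S T U V)) :=
  Term.func (L := LHOLpm) (Sum.inl (HFunc.S T U V)) finZeroElim
def pOr : Term LHOLpm (HFunc.ret .dor) :=
  Term.func (L := LHOLpm) (Sum.inl HFunc.dor) finZeroElim
def pNot : Term LHOLpm (HFunc.ret .dnot) :=
  Term.func (L := LHOLpm) (Sum.inl HFunc.dnot) finZeroElim
def pAll (T : STy) : Term LHOLpm (HFunc.ret (.dall T)) :=
  Term.func (L := LHOLpm) (Sum.inl (HFunc.dall T)) finZeroElim
def pZero : Term LHOLpm (HFunc.ret .zero) :=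
  Term.func (L := LHOLpm) (Sum.inl HFunc.zero) finZeroElim
def pSucc : Term LHOLpm (HFunc.ret .succ) :=
  Term.func (L := LHOLpm) (Sum.inl HFunc.succ) finZeroElim
def pPred : Term LHOLpm (HFunc.ret .pred) :=
  Term.func (L := LHOLpm) (Sum.inl HFunc.pred) finZeroElim
def pNull : Term LHOLpm (HFunc.ret .null) :=
  Term.func (L := LHOLpm) (Sum.inl HFunc.null) finZeroElim

/-- The proposition `ε(t)` of HOL. -/
def hEps (t : Term LHOL STy.o) : Form LHOL :=
  Form.pred (L := LHOL) () (args1 (L' := LHOL) t)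

/-- The proposition `ε(t)` of HOL±. -/
def pEps (t : Term LHOLpm STy.o) : Form LHOLpm :=
  Form.pred (L := LHOLpm) () (args1 (L' := LHOLpm) t)

/-- The equations of HOL (and of HOL±), on the language of HOL. -/
inductive HOLEq : (s : STy) → Term LHOL s → Term LHOL s → Prop where
  | Keq (T U : STy) :
      HOLEq T (hap (hap (hK T U) (.var 0)) (.var 1)) (.var 0)
  | Seq (T U V : STy) :
      HOLEq V (hap (hap (hap (hS T U V) (.var 0)) (.var 1)) (.var 2))
        (hap (hap (.var 0) (.var 2)) (hap (.var 1) (.var 2)))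
  | PredSucc :
      HOLEq .iota (hap (hPred) (hap (hSucc) (.var 0))) (.var 0)

/-- The rewrite rules of HOL (used both negatively and positively). -/
inductive HOLRule : Form LHOL → Form LHOL → Prop where
  | orRule :
      HOLRule (hEps (hap (hap (hOr) (.var 0)) (.var 1)))
        (.or (hEps (.var 0)) (hEps (.var 1)))
  | notRule :
      HOLRule (hEps (hap (hNot) (.var 0))) (.not (hEps (.var 0)))
  | allRule (T : STy) :
      HOLRule (hEps (hap (hAll T) (.var 0)))
        (.all T (hEps (hap (.var 0) (.var 0))))
  | nullSucc :
      HOLRule (hEps (hap (hNull) (hap (hSucc) (.var 0)))) .bot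
  | nullZero :
      HOLRule (hEps (hap (hNull) (hZero))) .top

/-- The (non polarized) rewrite system HOL, each rule being taken both as a
negative and as a positive rule. -/
def HOLsys : PRS LHOL where
  eqns := HOLEq
  neg := HOLRule
  pos := HOLRule
  neg_atomic := by rintro P A h; cases h <;> trivial
  pos_atomic := by rintro P A h; cases h <;> trivial

/-- The equations of HOL±. -/
inductive HOLpmEq : (s : STy) → Term LHOLpm s → Term LHOLpm s → Prop where
  | Keq (T U : STy) :
      HOLpmEq T (pap (pap (pK T U) (.var 0)) (.var 1)) (.var 0)
  | Seq (T U V : STy) :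
      HOLpmEq V (pap (pap (pap (pS T U V) (.var 0)) (.var 1)) (.var 2))
        (pap (pap (.var 0) (.var 2)) (pap (.var 1) (.var 2)))
  | PredSucc :
      HOLpmEq .iota (pap (pPred) (pap (pSucc) (.var 0))) (.var 0)

/-- The negative rules of HOL±. -/
inductive HOLpmNeg : Form LHOLpm → Form LHOLpm → Prop where
  | orRule :
      HOLpmNeg (pEps (pap (pap (pOr) (.var 0)) (.var 1)))
        (.or (pEps (.var 0)) (pEps (.var 1)))
  | notRule :
      HOLpmNeg (pEps (pap (pNot) (.var 0))) (.not (pEps (.var 0)))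
  | allRule (T : STy) :
      HOLpmNeg (pEps (pap (pAll T) (.var 0)))
        (.all T (pEps (pap (.var 0) (.var 0))))
  | nullSucc :
      HOLpmNeg (pEps (pap (pNull) (pap (pSucc) (.var 0)))) .bot

/-- The positive rules of HOL±. -/
inductive HOLpmPos : Form LHOLpm → Form LHOLpm → Prop where
  | orRule₁ :
      HOLpmPos (pEps (pap (pap (pOr) (.var 0)) (.var 1)))
        (.not (.not (pEps (.var 0))))
  | orRule₂ :
      HOLpmPos (pEps (pap (pap (pOr) (.var 0)) (.var 1)))
        (.not (.not (pEps (.var 1))))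
  | notRule :
      HOLpmPos (pEps (pap (pNot) (.var 0))) (.not (pEps (.var 0)))
  | allRule (T : STy) :
      HOLpmPos (pEps (pap (pAll T) (.var 0)))
        (.not (.not (pEps (pap (.var 0) (hH T (.var 0))))))
  | nullZero :
      HOLpmPos (pEps (pap (pNull) (pZero))) (.not .bot)

/-- The clausal polarized rewrite system HOL±. -/
def HOLpm : PRS LHOLpm where
  eqns := HOLpmEq
  neg := HOLpmNeg
  pos := HOLpmPos
  neg_atomic := by rintro P A h; cases h <;> trivial
  pos_atomic := by rintro P A h; cases h <;> trivial

/-- The embedding of the terms of HOL into those of HOL±. -/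
def embT : (s : STy) → Term LHOL s → Term LHOLpm s
  | _, .var n => .var n
  | _, .func f args => Term.func (L := LHOLpm) (Sum.inl f) fun i => embT _ (args i)

/-- The embedding of the propositions of HOL into those of HOL±; a proposition
of HOL± contains no occurrence of the symbols `H_T` if and only if it is in the
image of this embedding. -/
def embF : Form LHOL → Form LHOLpm
  | .pred _ args => Form.pred (L := LHOLpm) () fun i => embT _ (args i)
  | .bot => .bot
  | .top => .top
  | .not A => .not (embF A)
  | .and A B => .and (embF A) (embF B)
  | .or A B => .or (embF A) (embF B)
  | .imp A B => .imp (embF A) (embF B)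
  | .all s A => .all s (embF A)
  | .ex s A => .ex s (embF A)


/-!
Each axiom of `U_R` is an implication that a single rewrite step justifies, and conversely.
In predicate logic, an instance of a rule `P → A` is an instance of the axiom `P ⇒ A` (or
`A ⇒ P` for a positive rule), an `=_E`-step inside an atom follows from the Leibniz axiom once
`t = u` has been derived from the equations of `E` and the axioms of equality, and a step under
a connective is carried by its monotonicity, which turns into antitonicity exactly where the
polarity flips. Modulo `R`, an axiom `∀(P ⇒ A)` of `U_R` is an identity because `P` rewrites
to `A` at the right polarity, and `∀(t = u)` because `t = u` rewrites positively to the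
reflexivity instance `t = t`.
-/

abbrev Subst (L : Language) : Type := (s : L.Sorts) → ℕ → Term L s

namespace Subst

def comp (σ' σ : Subst L) : Subst L := fun s n => Term.subst σ' s (σ s n)

protected def id : Subst L := fun _ n => .var n

def ofRen (ρ : (s : L.Sorts) → ℕ → ℕ) : Subst L := fun s n => .var (ρ s n)

end Subst

theorem Term.rename_eq_subst (ρ : (s : L.Sorts) → ℕ → ℕ) (s : L.Sorts) (t : Term L s) :
    Term.rename ρ s t = Term.subst (Subst.ofRen ρ) s t := by
  induction t with
  | var n => rfl
  | func f args ih => exact congrArg _ (funext ih)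

theorem Term.subst_subst (σ' σ : Subst L) (s : L.Sorts) (t : Term L s) :
    Term.subst σ' s (Term.subst σ s t) = Term.subst (Subst.comp σ' σ) s t := by
  induction t with
  | var n => rfl
  | func f args ih => exact congrArg _ (funext ih)

theorem Term.subst_id (s : L.Sorts) (t : Term L s) : Term.subst Subst.id s t = t := by
  induction t with
  | var n => rfl
  | func f args ih => exact congrArg _ (funext ih)

theorem liftSubst_ofRen (s : L.Sorts) (ρ : (s : L.Sorts) → ℕ → ℕ) :
    liftSubst s (Subst.ofRen ρ) = Subst.ofRen (liftRen s ρ) := by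
  funext s' n
  simp only [liftSubst, Subst.ofRen, liftRen]
  split
  · cases n <;> simp [Term.rename, shiftRen, *]
  · simp [Term.rename, shiftRen, *]

theorem liftSubst_id (s : L.Sorts) : liftSubst s (Subst.id : Subst L) = Subst.id := by
  funext s' n
  simp only [liftSubst, Subst.id]
  split
  · cases n <;> simp [Term.rename, shiftRen, *]
  · simp [Term.rename, shiftRen, *]

theorem Term.subst_liftSubst_rename_shift (s₀ : L.Sorts) (σ : Subst L) (s : L.Sorts)
    (t : Term L s) :
    Term.subst (liftSubst s₀ σ) s (Term.rename (shiftRen s₀) s t) =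
      Term.rename (shiftRen s₀) s (Term.subst σ s t) := by
  simp only [Term.rename_eq_subst, Term.subst_subst]
  congr 1
  funext s' n
  by_cases h : s' = s₀
  · subst h
    simp [Subst.comp, Subst.ofRen, Term.subst, liftSubst, shiftRen, Term.rename_eq_subst]
  · simp [Subst.comp, Subst.ofRen, Term.subst, liftSubst, shiftRen, h, Term.rename_eq_subst]

theorem liftSubst_comp (s : L.Sorts) (σ' σ : Subst L) :
    liftSubst s (Subst.comp σ' σ) = Subst.comp (liftSubst s σ') (liftSubst s σ) := by
  funext s' n
  by_cases h : s' = s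
  · subst h
    cases n with
    | zero => simp [Term.subst, liftSubst, Subst.comp]
    | succ n =>
      simp only [liftSubst, Subst.comp]
      exact (Term.subst_liftSubst_rename_shift _ σ' _ (σ _ n)).symm
  · simp only [liftSubst, Subst.comp, if_neg h]
    exact (Term.subst_liftSubst_rename_shift s σ' _ (σ s' n)).symm

theorem Form.rename_eq_subst (ρ : (s : L.Sorts) → ℕ → ℕ) (A : Form L) :
    Form.rename ρ A = Form.subst (Subst.ofRen ρ) A := by
  induction A generalizing ρ with
  | pred p args => exact congrArg _ (funext fun i => Term.rename_eq_subst ρ _ (args i))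
  | bot | top => rfl
  | not A ih => simp only [Form.rename, Form.subst, ih]
  | and A B ihA ihB | or A B ihA ihB | imp A B ihA ihB =>
    simp only [Form.rename, Form.subst, ihA, ihB]
  | all s A ih | ex s A ih => simp only [Form.rename, Form.subst, ih, liftSubst_ofRen]

theorem Form.subst_subst (σ' σ : Subst L) (A : Form L) :
    Form.subst σ' (Form.subst σ A) = Form.subst (Subst.comp σ' σ) A := by
  induction A generalizing σ' σ with
  | pred p args => exact congrArg _ (funext fun i => Term.subst_subst σ' σ _ (args i))
  | bot | top => rfl
  | not A ih => simp only [Form.subst, ih]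
  | and A B ihA ihB | or A B ihA ihB | imp A B ihA ihB => simp only [Form.subst, ihA, ihB]
  | all s A ih | ex s A ih => simp only [Form.subst, ih, liftSubst_comp]

theorem Form.subst_id (A : Form L) : Form.subst Subst.id A = A := by
  induction A with
  | pred p args => exact congrArg _ (funext fun i => Term.subst_id _ (args i))
  | bot | top => rfl
  | not A ih => simp only [Form.subst, ih]
  | and A B ihA ihB | or A B ihA ihB | imp A B ihA ihB => simp only [Form.subst, ihA, ihB]
  | all s A ih | ex s A ih => simp only [Form.subst, liftSubst_id, ih]

theorem Term.freeList_rename (ρ : (s : L.Sorts) → ℕ → ℕ) (s : L.Sorts) (t : Term L s) :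
    Term.freeList s (Term.rename ρ s t) =
      (Term.freeList s t).map fun v => ⟨v.1, ρ v.1 v.2⟩ := by
  induction t with
  | var n => rfl
  | func f args ih =>
    simp only [Term.rename, Term.freeList, List.map_flatMap]
    exact List.flatMap_congr fun i _ => ih i

theorem unbind_map_liftRen (s : L.Sorts) (ρ : (s : L.Sorts) → ℕ → ℕ)
    (l : List ((_ : L.Sorts) × ℕ)) :
    unbind s (l.map fun v => ⟨v.1, liftRen s ρ v.1 v.2⟩) =
      (unbind s l).map fun v => ⟨v.1, ρ v.1 v.2⟩ := by
  induction l with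
  | nil => rfl
  | cons v l ih =>
    obtain ⟨s', n⟩ := v
    by_cases h : s' = s
    · subst h
      cases n <;> simpa [unbind, liftRen, List.filter_cons] using ih
    · simpa [unbind, liftRen, h, List.filter_cons] using ih

theorem Form.freeList_rename (ρ : (s : L.Sorts) → ℕ → ℕ) (A : Form L) :
    (Form.rename ρ A).freeList = A.freeList.map fun v => ⟨v.1, ρ v.1 v.2⟩ := by
  induction A generalizing ρ with
  | pred p args =>
    simp only [Form.rename, Form.freeList, List.map_flatMap]
    exact List.flatMap_congr fun i _ => Term.freeList_rename ρ _ (args i)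
  | bot | top => rfl
  | not A ih => simp only [Form.rename, Form.freeList, ih]
  | and A B ihA ihB | or A B ihA ihB | imp A B ihA ihB =>
    simp only [Form.rename, Form.freeList, ihA, ihB, List.map_append]
  | all s A ih | ex s A ih => simp only [Form.rename, Form.freeList, ih, unbind_map_liftRen]

theorem mem_unbind_of_mem {s : L.Sorts} {l : List ((_ : L.Sorts) × ℕ)}
    {v : (_ : L.Sorts) × ℕ} (hv : v ∈ l) (hne : ¬(v.1 = s ∧ v.2 = 0)) :
    (⟨v.1, if v.1 = s then v.2 - 1 else v.2⟩ : (_ : L.Sorts) × ℕ) ∈ unbind s l := by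
  refine List.mem_map.2 ⟨v, List.mem_filter.2 ⟨hv, ?_⟩, ?_⟩
  · simp only [decide_eq_true_eq]; exact hne
  · split <;> rfl

theorem Term.subst_congr {σ σ' : Subst L} (s : L.Sorts) (t : Term L s)
    (h : ∀ v ∈ Term.freeList s t, σ v.1 v.2 = σ' v.1 v.2) :
    Term.subst σ s t = Term.subst σ' s t := by
  induction t with
  | var n => exact h ⟨_, n⟩ (List.mem_singleton_self _)
  | func f args ih =>
    refine congrArg _ (funext fun i => ih i fun v hv => h v ?_)
    exact List.mem_flatMap.2 ⟨i, List.mem_finRange i, hv⟩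

theorem liftSubst_congr {σ σ' : Subst L} {s : L.Sorts} {l : List ((_ : L.Sorts) × ℕ)}
    (h : ∀ v ∈ unbind s l, σ v.1 v.2 = σ' v.1 v.2) :
    ∀ v ∈ l, liftSubst s σ v.1 v.2 = liftSubst s σ' v.1 v.2 := by
  rintro ⟨s', n⟩ hv
  by_cases hs : s' = s
  · subst hs
    cases n with
    | zero => simp [liftSubst]
    | succ n =>
      have := h ⟨s', n⟩ (by simpa using mem_unbind_of_mem (s := s') hv (by simp))
      simp [liftSubst, this]
  · have := h ⟨s', n⟩ (by simpa [hs] using mem_unbind_of_mem (s := s) hv (by simp [hs]))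
    simp [liftSubst, hs, this]

theorem Form.subst_congr {σ σ' : Subst L} (A : Form L)
    (h : ∀ v ∈ A.freeList, σ v.1 v.2 = σ' v.1 v.2) :
    Form.subst σ A = Form.subst σ' A := by
  induction A generalizing σ σ' with
  | pred p args =>
    refine congrArg _ (funext fun i => Term.subst_congr _ (args i) fun v hv => h v ?_)
    exact List.mem_flatMap.2 ⟨i, List.mem_finRange i, hv⟩
  | bot | top => rfl
  | not A ih => exact congrArg _ (ih h)
  | and A B ihA ihB | or A B ihA ihB | imp A B ihA ihB =>
    simp only [Form.freeList, List.mem_append] at h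
    simp only [Form.subst, ihA fun v hv => h v (.inl hv), ihB fun v hv => h v (.inr hv)]
  | all s A ih | ex s A ih => exact congrArg _ (ih (liftSubst_congr h))

theorem Form.subst_of_freeList_eq_nil {A : Form L} (h : A.freeList = []) (σ : Subst L) :
    Form.subst σ A = A := by
  rw [Form.subst_congr A (σ' := Subst.id) (by simp [h]), Form.subst_id]

theorem Form.shift_of_freeList_eq_nil {A : Form L} (h : A.freeList = []) (s : L.Sorts) :
    Form.shift s A = A := by
  rw [Form.shift, Form.rename_eq_subst, Form.subst_of_freeList_eq_nil h]

def abstractRen (s : L.Sorts) (k : ℕ) : (s' : L.Sorts) → ℕ → ℕ :=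
  fun s' n => if s' = s then (if n = k then 0 else n + 1) else n

theorem Form.abstractVar_eq_rename (s : L.Sorts) (k : ℕ) (A : Form L) :
    A.abstractVar s k = .all s (Form.rename (abstractRen s k) A) := by
  rw [Form.rename_eq_subst, Form.abstractVar]
  congr 2
  funext s' n
  simp only [Subst.ofRen, abstractRen]
  split_ifs <;> rfl

theorem Form.freeList_abstractVar (s : L.Sorts) (k : ℕ) (A : Form L) :
    (A.abstractVar s k).freeList = A.freeList.filter fun v => decide ¬(v.1 = s ∧ v.2 = k) := by
  rw [Form.abstractVar_eq_rename, Form.freeList, Form.freeList_rename]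
  induction A.freeList with
  | nil => rfl
  | cons v l ih =>
    obtain ⟨s', n⟩ := v
    by_cases hs : s' = s
    · subst hs
      by_cases hn : n = k
      · subst hn
        simpa [unbind, abstractRen, List.filter_cons] using ih
      · simpa [unbind, abstractRen, hn, List.filter_cons] using ih
    · simpa [unbind, abstractRen, hs, List.filter_cons] using ih

theorem Form.length_freeList_abstractVar_head {A : Form L} {v : (_ : L.Sorts) × ℕ}
    {l : List ((_ : L.Sorts) × ℕ)} (h : A.freeList = v :: l) :
    (A.abstractVar v.1 v.2).freeList.length ≤ l.length := by
  rw [Form.freeList_abstractVar, h, List.filter_cons_of_neg (by simp)]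
  exact List.length_filter_le _ _

theorem freeList_closeSteps (k : ℕ) (A : Form L) (hA : A.freeList.length ≤ k) :
    (closeSteps k A).freeList = [] := by
  induction k generalizing A with
  | zero => exact List.eq_nil_of_length_eq_zero (Nat.le_zero.1 hA)
  | succ k ih =>
    rw [closeSteps]
    rcases hfl : A.freeList with _ | ⟨v, l⟩
    · exact hfl
    · refine ih _ ((Form.length_freeList_abstractVar_head hfl).trans ?_)
      simpa [hfl] using hA

theorem freeList_univClosure (A : Form L) : (univClosure A).freeList = [] :=
  freeList_closeSteps _ _ le_rfl

theorem shift_univClosure (s : L.Sorts) (A : Form L) :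
    Form.shift s (univClosure A) = univClosure A :=
  Form.shift_of_freeList_eq_nil (freeList_univClosure A) s

theorem Term.subst_subst0_rename_shift {s : L.Sorts} (t : Term L s) (s' : L.Sorts)
    (u : Term L s') : Term.subst (subst0 t) s' (Term.rename (shiftRen s) s' u) = u := by
  rw [Term.rename_eq_subst, Term.subst_subst]
  have hid : Subst.comp (subst0 t) (Subst.ofRen (shiftRen s)) = Subst.id := by
    funext s'' m
    by_cases h : s'' = s
    · subst h; simp [Subst.comp, Subst.ofRen, Term.subst, subst0, shiftRen, Subst.id]
    · simp [Subst.comp, Subst.ofRen, Term.subst, subst0, shiftRen, Subst.id, h, Ne.symm h]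
  rw [hid, Term.subst_id]

theorem Form.inst_var_zero_rename_liftRen_shiftRen (s : L.Sorts) (A : Form L) :
    Form.inst (s := s) (.var 0) (Form.rename (liftRen s (shiftRen s)) A) = A := by
  rw [Form.rename_eq_subst, Form.inst, Form.subst_subst]
  have hid : Subst.comp (subst0 (Term.var (s := s) 0)) (Subst.ofRen (liftRen s (shiftRen s))) =
      Subst.id := by
    funext s' n
    by_cases h : s' = s
    · subst h
      cases n <;> simp [Subst.comp, Subst.ofRen, Term.subst, subst0, liftRen, shiftRen, Subst.id]
    · simp [Subst.comp, Subst.ofRen, Term.subst, subst0, liftRen, shiftRen, Subst.id, h,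
        Ne.symm h]
  rw [hid, Form.subst_id]

theorem Form.subst_abstractVar (σ : Subst L) (s : L.Sorts) (k : ℕ) (A : Form L) :
    Form.subst σ (A.abstractVar s k) =
      .all s (Form.subst (Subst.comp (liftSubst s σ) (Subst.ofRen (abstractRen s k))) A) := by
  rw [Form.abstractVar_eq_rename, Form.rename_eq_subst, Form.subst, Form.subst_subst]

theorem Form.inst_subst_abstractRen (σ : Subst L) (s : L.Sorts) (k : ℕ) (A : Form L) :
    Form.inst (σ s k)
      (Form.subst (Subst.comp (liftSubst s σ) (Subst.ofRen (abstractRen s k))) A) =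
        Form.subst σ A := by
  rw [Form.inst, Form.subst_subst]
  congr 1
  funext s' n
  by_cases h : s' = s
  · subst h
    by_cases hn : n = k
    · subst hn
      simp [Subst.comp, Subst.ofRen, Term.subst, abstractRen, liftSubst, subst0]
    · simp [Subst.comp, Subst.ofRen, Term.subst, abstractRen, liftSubst, hn,
        Term.subst_subst0_rename_shift]
  · simp [Subst.comp, Subst.ofRen, Term.subst, abstractRen, liftSubst, h,
      Term.subst_subst0_rename_shift]

namespace Provable

variable {rs : PRS L} {Γ Δ : Multiset (Form L)}

theorem weakenL (h : Provable rs Γ Δ) (Θ : Multiset (Form L)) : Provable rs (Γ + Θ) Δ := by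
  induction Θ using Multiset.induction_on with
  | empty => simpa using h
  | cons A Θ ih =>
    obtain ⟨n, hn⟩ := ih
    exact ⟨n + 1, by rw [Multiset.add_cons]; exact Pf.weakL hn⟩

theorem weakenR (h : Provable rs Γ Δ) (Θ : Multiset (Form L)) : Provable rs Γ (Δ + Θ) := by
  induction Θ using Multiset.induction_on with
  | empty => simpa using h
  | cons A Θ ih =>
    obtain ⟨n, hn⟩ := ih
    exact ⟨n + 1, by rw [Multiset.add_cons]; exact Pf.weakR hn⟩

theorem cons_of_singleton {A B : Form L} (h : Provable rs {A} {B}) :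
    Provable rs (A ::ₘ Γ) (B ::ₘ Δ) := by
  simpa only [Multiset.singleton_add] using (h.weakenL Γ).weakenR Δ

/-- Weakening followed by contraction rewrites a hypothesis. -/
theorem of_rwNegS_left {A A' : Form L} (hA : RwNegS rs A A') (h : Provable rs (A' ::ₘ Γ) Δ) :
    Provable rs (A ::ₘ Γ) Δ :=
  let ⟨_, hn⟩ := h
  ⟨_, Pf.contrL hA hA (Pf.weakL hn)⟩

theorem of_rwPosS_right {B B' : Form L} (hB : RwPosS rs B B') (h : Provable rs Γ (B' ::ₘ Δ)) :
    Provable rs Γ (B ::ₘ Δ) :=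
  let ⟨_, hn⟩ := h
  ⟨_, Pf.contrR hB hB (Pf.weakR hn)⟩

theorem all_refl {s : L.Sorts} {C : Form L}
    (h : Provable rs (C ::ₘ Γ.map (Form.shift s)) (C ::ₘ Δ.map (Form.shift s))) :
    Provable rs (.all s C ::ₘ Γ) (.all s C ::ₘ Δ) := by
  obtain ⟨n, hn⟩ := h
  refine ⟨n + 1 + 1, Pf.allR .refl ?_⟩
  rw [Multiset.map_cons]
  exact Pf.allL (t := .var 0) .refl
    (by rw [Form.inst_var_zero_rename_liftRen_shiftRen]; exact .refl) hn

theorem ex_refl {s : L.Sorts} {C : Form L}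
    (h : Provable rs (C ::ₘ Γ.map (Form.shift s)) (C ::ₘ Δ.map (Form.shift s))) :
    Provable rs (.ex s C ::ₘ Γ) (.ex s C ::ₘ Δ) := by
  obtain ⟨n, hn⟩ := h
  refine ⟨n + 1 + 1, Pf.exL .refl ?_⟩
  rw [Multiset.map_cons]
  exact Pf.exR (t := .var 0) .refl
    (by rw [Form.inst_var_zero_rename_liftRen_shiftRen]; exact .refl) hn

theorem refl (C : Form L) : Provable rs (C ::ₘ Γ) (C ::ₘ Δ) := by
  induction C generalizing Γ Δ with
  | pred p args => exact cons_of_singleton ⟨1, Pf.ax (P := .pred p args) trivial .refl .refl⟩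
  | bot => exact ⟨1, Pf.botL .refl⟩
  | top => exact ⟨1, Pf.topR .refl⟩
  | not C ih =>
    obtain ⟨n, hn⟩ := ih (Γ := Γ) (Δ := Δ)
    refine ⟨n + 1 + 1, Pf.notL .refl ?_⟩
    rw [Multiset.cons_swap]
    exact Pf.notR .refl hn
  | and C₁ C₂ ih₁ ih₂ =>
    obtain ⟨n, hn⟩ := ih₁ (Γ := C₂ ::ₘ Γ) (Δ := Δ)
    obtain ⟨m, hm⟩ := ih₂ (Γ := C₁ ::ₘ Γ) (Δ := Δ)
    rw [Multiset.cons_swap] at hm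
    exact ⟨_, Pf.andL .refl (Pf.andR .refl hn hm)⟩
  | or C₁ C₂ ih₁ ih₂ =>
    obtain ⟨n, hn⟩ := ih₁ (Γ := Γ) (Δ := C₂ ::ₘ Δ)
    obtain ⟨m, hm⟩ := ih₂ (Γ := Γ) (Δ := C₁ ::ₘ Δ)
    rw [Multiset.cons_swap] at hm
    exact ⟨_, Pf.orL .refl (Pf.orR .refl hn) (Pf.orR .refl hm)⟩
  | imp C₁ C₂ ih₁ ih₂ =>
    obtain ⟨n, hn⟩ := ih₁ (Γ := Γ) (Δ := C₂ ::ₘ Δ)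
    obtain ⟨m, hm⟩ := ih₂ (Γ := C₁ ::ₘ Γ) (Δ := Δ)
    refine ⟨n + m + 1 + 1, Pf.impR .refl ?_⟩
    rw [Multiset.cons_swap]
    exact Pf.impL .refl hn hm
  | all s C ih => exact all_refl ih
  | ex s C ih => exact ex_refl ih

theorem of_rwNegS_rwPosS {A B C : Form L} (hA : RwNegS rs A C) (hB : RwPosS rs B C) :
    Provable rs (A ::ₘ Γ) (B ::ₘ Δ) :=
  of_rwNegS_left hA (of_rwPosS_right hB (refl C))

theorem closeSteps_left {A : Form L} (σ : Subst L) (k : ℕ) (hk : A.freeList.length ≤ k)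
    (h : Provable rs (A.subst σ ::ₘ Γ) Δ) : Provable rs (closeSteps k A ::ₘ Γ) Δ := by
  induction k generalizing A with
  | zero => rwa [closeSteps, ← Form.subst_of_freeList_eq_nil
      (List.eq_nil_of_length_eq_zero (Nat.le_zero.1 hk)) σ]
  | succ k ih =>
    rw [closeSteps]
    rcases hfl : A.freeList with _ | ⟨v, l⟩
    · rwa [← Form.subst_of_freeList_eq_nil hfl σ]
    · refine ih ((Form.length_freeList_abstractVar_head hfl).trans (by simpa [hfl] using hk)) ?_
      obtain ⟨n, hn⟩ := h
      rw [Form.subst_abstractVar]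
      refine ⟨n + 1, Pf.allL (t := σ v.1 v.2) .refl ?_ hn⟩
      rw [Form.inst_subst_abstractRen]
      exact .refl

theorem univClosure_left {A : Form L} (σ : Subst L) (h : Provable rs (A.subst σ ::ₘ Γ) Δ) :
    Provable rs (univClosure A ::ₘ Γ) Δ :=
  closeSteps_left σ _ le_rfl h

theorem closeSteps_right (hΓ : ∀ s, Γ.map (Form.shift s) = Γ) (k : ℕ) {A : Form L}
    (h : ∀ σ : Subst L, Provable rs Γ {A.subst σ}) : Provable rs Γ {closeSteps k A} := by
  induction k generalizing A with
  | zero => simpa [closeSteps, Form.subst_id] using h Subst.id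
  | succ k ih =>
    rw [closeSteps]
    rcases A.freeList with _ | ⟨v, l⟩
    · simpa [Form.subst_id] using h Subst.id
    · refine ih fun σ => ?_
      obtain ⟨n, hn⟩ := h (Subst.comp (liftSubst v.1 σ) (Subst.ofRen (abstractRen v.1 v.2)))
      rw [Form.subst_abstractVar]
      refine ⟨n + 1, Pf.allR .refl ?_⟩
      simpa [hΓ v.1] using hn

theorem univClosure_right (hΓ : ∀ s, Γ.map (Form.shift s) = Γ) {A : Form L}
    (h : ∀ σ : Subst L, Provable rs Γ {A.subst σ}) : Provable rs Γ {univClosure A} :=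
  closeSteps_right hΓ _ h

theorem univClosure_imp {X Y : Form L}
    (h : ∀ σ : Subst L, Provable rs {X.subst σ} {Y.subst σ}) :
    Provable rs 0 {univClosure (X.imp Y)} :=
  univClosure_right (by simp) fun σ =>
    let ⟨_, h⟩ := h σ
    ⟨_, Pf.impR .refl h⟩

end Provable

theorem map_shift_add_of_forall_shift_eq {s : L.Sorts} {Γ Θ : Multiset (Form L)}
    (hΘ : ∀ C ∈ Θ, Form.shift s C = C) :
    (Γ + Θ).map (Form.shift s) = Γ.map (Form.shift s) + Θ := by
  rw [Multiset.map_add, Multiset.map_congr rfl hΘ, Multiset.map_id']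

namespace ProvableIn

variable {rs : PRS L} {T : Set (Form L)} {Γ Δ : Multiset (Form L)} {X Y Z : Form L}

theorem of_provable (h : Provable rs Γ Δ) : ProvableIn rs T Γ Δ :=
  ⟨0, by simp, by simpa using h⟩

theorem map {Γ' Δ' : Multiset (Form L)}
    (f : ∀ Θ : Multiset (Form L), (∀ C ∈ Θ, C ∈ T) →
      Provable rs (Γ + Θ) Δ → Provable rs (Γ' + Θ) Δ') :
    ProvableIn rs T Γ Δ → ProvableIn rs T Γ' Δ'
  | ⟨Θ, hΘ, h⟩ => ⟨Θ, hΘ, f Θ hΘ h⟩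

/-- The two derivations are merged by weakening both with the union of their axioms. -/
theorem map₂ {Γ₁ Δ₁ Γ₂ Δ₂ : Multiset (Form L)}
    (f : ∀ Θ : Multiset (Form L), Provable rs (Γ₁ + Θ) Δ₁ → Provable rs (Γ₂ + Θ) Δ₂ →
      Provable rs (Γ + Θ) Δ) :
    ProvableIn rs T Γ₁ Δ₁ → ProvableIn rs T Γ₂ Δ₂ → ProvableIn rs T Γ Δ
  | ⟨Θ₁, hΘ₁, h₁⟩, ⟨Θ₂, hΘ₂, h₂⟩ => by
    refine ⟨Θ₁ + Θ₂, fun C hC => (Multiset.mem_add.1 hC).elim (hΘ₁ C) (hΘ₂ C),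
      f _ ?_ ?_⟩
    · simpa only [add_assoc] using h₁.weakenL Θ₂
    · simpa only [add_assoc, add_comm Θ₂] using h₂.weakenL Θ₁

theorem refl : ProvableIn rs T (X ::ₘ Γ) (X ::ₘ Δ) :=
  of_provable (Provable.refl X)

theorem useAx (hX : X ∈ T) : ProvableIn rs T (X ::ₘ Γ) Δ → ProvableIn rs T Γ Δ
  | ⟨Θ, hΘ, h⟩ => ⟨X ::ₘ Θ, by simpa [hX] using hΘ, by simpa using h⟩

theorem weakenL (h : ProvableIn rs T Γ Δ) (Γ' : Multiset (Form L)) :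
    ProvableIn rs T (Γ + Γ') Δ :=
  h.map fun _ _ h => by rw [add_right_comm]; exact h.weakenL Γ'

theorem weakenR (h : ProvableIn rs T Γ Δ) (Δ' : Multiset (Form L)) :
    ProvableIn rs T Γ (Δ + Δ') :=
  h.map fun _ _ h => h.weakenR Δ'

theorem cut (h₁ : ProvableIn rs T Γ (X ::ₘ Δ)) (h₂ : ProvableIn rs T (X ::ₘ Γ) Δ) :
    ProvableIn rs T Γ Δ :=
  map₂ (fun _ ⟨_, h₁⟩ ⟨_, h₂⟩ => by
    rw [Multiset.cons_add] at h₂; exact ⟨_, Pf.cut rfl .refl .refl h₂ h₁⟩) h₁ h₂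

theorem topR : ProvableIn rs T Γ (.top ::ₘ Δ) :=
  of_provable ⟨1, Pf.topR .refl⟩

theorem notL (h : ProvableIn rs T Γ (X ::ₘ Δ)) : ProvableIn rs T (X.not ::ₘ Γ) Δ :=
  h.map fun _ _ ⟨_, h⟩ => by rw [Multiset.cons_add]; exact ⟨_, Pf.notL .refl h⟩

theorem notR (h : ProvableIn rs T (X ::ₘ Γ) Δ) : ProvableIn rs T Γ (X.not ::ₘ Δ) :=
  h.map fun _ _ ⟨_, h⟩ => by rw [Multiset.cons_add] at h; exact ⟨_, Pf.notR .refl h⟩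

theorem andL (h : ProvableIn rs T (X ::ₘ Y ::ₘ Γ) Δ) :
    ProvableIn rs T (X.and Y ::ₘ Γ) Δ :=
  h.map fun _ _ ⟨_, h⟩ => by
    simp only [Multiset.cons_add] at h ⊢; exact ⟨_, Pf.andL .refl h⟩

theorem andR (h₁ : ProvableIn rs T Γ (X ::ₘ Δ)) (h₂ : ProvableIn rs T Γ (Y ::ₘ Δ)) :
    ProvableIn rs T Γ (X.and Y ::ₘ Δ) :=
  map₂ (fun _ ⟨_, h₁⟩ ⟨_, h₂⟩ => ⟨_, Pf.andR .refl h₁ h₂⟩) h₁ h₂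

theorem orL (h₁ : ProvableIn rs T (X ::ₘ Γ) Δ) (h₂ : ProvableIn rs T (Y ::ₘ Γ) Δ) :
    ProvableIn rs T (X.or Y ::ₘ Γ) Δ :=
  map₂ (fun _ ⟨_, h₁⟩ ⟨_, h₂⟩ => by
    simp only [Multiset.cons_add] at h₁ h₂ ⊢; exact ⟨_, Pf.orL .refl h₁ h₂⟩) h₁ h₂

theorem orR (h : ProvableIn rs T Γ (X ::ₘ Y ::ₘ Δ)) : ProvableIn rs T Γ (X.or Y ::ₘ Δ) :=
  h.map fun _ _ ⟨_, h⟩ => ⟨_, Pf.orR .refl h⟩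

theorem impL (h₁ : ProvableIn rs T Γ (X ::ₘ Δ)) (h₂ : ProvableIn rs T (Y ::ₘ Γ) Δ) :
    ProvableIn rs T (X.imp Y ::ₘ Γ) Δ :=
  map₂ (fun _ ⟨_, h₁⟩ ⟨_, h₂⟩ => by
    simp only [Multiset.cons_add] at h₂ ⊢; exact ⟨_, Pf.impL .refl h₁ h₂⟩) h₁ h₂

theorem impR (h : ProvableIn rs T (X ::ₘ Γ) (Y ::ₘ Δ)) :
    ProvableIn rs T Γ (X.imp Y ::ₘ Δ) :=
  h.map fun _ _ ⟨_, h⟩ => by rw [Multiset.cons_add] at h; exact ⟨_, Pf.impR .refl h⟩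

theorem allL {s : L.Sorts} (t : Term L s) (h : ProvableIn rs T (Form.inst t X ::ₘ Γ) Δ) :
    ProvableIn rs T (.all s X ::ₘ Γ) Δ :=
  h.map fun _ _ ⟨_, h⟩ => by
    simp only [Multiset.cons_add] at h ⊢; exact ⟨_, Pf.allL .refl .refl h⟩

theorem exR {s : L.Sorts} (t : Term L s) (h : ProvableIn rs T Γ (Form.inst t X ::ₘ Δ)) :
    ProvableIn rs T Γ (.ex s X ::ₘ Δ) :=
  h.map fun _ _ ⟨_, h⟩ => ⟨_, Pf.exR .refl .refl h⟩

theorem univClosure_left (σ : Subst L) (h : ProvableIn rs T (X.subst σ ::ₘ Γ) Δ) :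
    ProvableIn rs T (univClosure X ::ₘ Γ) Δ :=
  h.map fun _ _ h => by
    simp only [Multiset.cons_add] at h ⊢; exact h.univClosure_left σ

theorem allR (hT : ∀ C ∈ T, ∀ s, Form.shift s C = C) {s : L.Sorts}
    (h : ProvableIn rs T (Γ.map (Form.shift s)) (X ::ₘ Δ.map (Form.shift s))) :
    ProvableIn rs T Γ (.all s X ::ₘ Δ) :=
  h.map fun _ hΘ ⟨_, h⟩ => by
    rw [← map_shift_add_of_forall_shift_eq fun C hC => hT C (hΘ C hC) s] at h
    exact ⟨_, Pf.allR .refl h⟩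

theorem exL (hT : ∀ C ∈ T, ∀ s, Form.shift s C = C) {s : L.Sorts}
    (h : ProvableIn rs T (X ::ₘ Γ.map (Form.shift s)) (Δ.map (Form.shift s))) :
    ProvableIn rs T (.ex s X ::ₘ Γ) Δ :=
  h.map fun _ hΘ ⟨_, h⟩ => by
    rw [Multiset.cons_add, ← map_shift_add_of_forall_shift_eq fun C hC => hT C (hΘ C hC) s] at h
    rw [Multiset.cons_add]
    exact ⟨_, Pf.exL .refl h⟩

theorem of_singleton (h : ProvableIn rs T 0 {X}) : ProvableIn rs T Γ (X ::ₘ Δ) := by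
  simpa [Multiset.singleton_add] using (h.weakenL Γ).weakenR Δ

theorem imp_elim (h : ProvableIn rs T 0 {X.imp Y}) : ProvableIn rs T (X ::ₘ Γ) (Y ::ₘ Δ) :=
  cut (of_singleton h) (impL refl refl)

theorem imp_refl : ProvableIn rs T 0 {X.imp X} :=
  impR refl

theorem imp_trans (h₁ : ProvableIn rs T 0 {X.imp Y}) (h₂ : ProvableIn rs T 0 {Y.imp Z}) :
    ProvableIn rs T 0 {X.imp Z} :=
  impR (cut (imp_elim h₁) (imp_elim h₂))

theorem not_anti (h : ProvableIn rs T 0 {Y.imp X}) : ProvableIn rs T 0 {X.not.imp Y.not} := by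
  refine impR (notR ?_)
  rw [Multiset.cons_swap]
  exact notL (imp_elim h)

theorem and_mono_left (h : ProvableIn rs T 0 {X.imp Y}) :
    ProvableIn rs T 0 {(X.and Z).imp (Y.and Z)} :=
  impR (andL (andR (imp_elim h) (by rw [Multiset.cons_swap]; exact refl)))

theorem and_mono_right (h : ProvableIn rs T 0 {X.imp Y}) :
    ProvableIn rs T 0 {(Z.and X).imp (Z.and Y)} :=
  impR (andL (andR refl (by rw [Multiset.cons_swap]; exact imp_elim h)))

theorem or_mono_left (h : ProvableIn rs T 0 {X.imp Y}) :
    ProvableIn rs T 0 {(X.or Z).imp (Y.or Z)} :=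
  impR (orL (orR (imp_elim h)) (orR (by rw [Multiset.cons_swap]; exact refl)))

theorem or_mono_right (h : ProvableIn rs T 0 {X.imp Y}) :
    ProvableIn rs T 0 {(Z.or X).imp (Z.or Y)} :=
  impR (orL (orR refl) (orR (by rw [Multiset.cons_swap]; exact imp_elim h)))

theorem imp_anti_left (h : ProvableIn rs T 0 {Y.imp X}) :
    ProvableIn rs T 0 {(X.imp Z).imp (Y.imp Z)} := by
  refine impR (impR ?_)
  rw [Multiset.cons_swap]
  exact impL (imp_elim h) refl

theorem imp_mono_right (h : ProvableIn rs T 0 {X.imp Y}) :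
    ProvableIn rs T 0 {(Z.imp X).imp (Z.imp Y)} := by
  refine impR (impR ?_)
  rw [Multiset.cons_swap]
  exact impL refl (imp_elim h)

theorem all_mono (hT : ∀ C ∈ T, ∀ s, Form.shift s C = C) {s : L.Sorts}
    (h : ProvableIn rs T 0 {X.imp Y}) : ProvableIn rs T 0 {(Form.all s X).imp (Form.all s Y)} := by
  refine impR (allR hT ?_)
  simp only [Multiset.map_cons, Multiset.map_zero]
  refine allL (.var 0) ?_
  rw [Form.inst_var_zero_rename_liftRen_shiftRen]
  exact imp_elim h

theorem ex_mono (hT : ∀ C ∈ T, ∀ s, Form.shift s C = C) {s : L.Sorts}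
    (h : ProvableIn rs T 0 {X.imp Y}) : ProvableIn rs T 0 {(Form.ex s X).imp (Form.ex s Y)} := by
  refine impR (exL hT ?_)
  simp only [Multiset.map_cons, Multiset.map_zero]
  refine exR (.var 0) ?_
  rw [Form.inst_var_zero_rename_liftRen_shiftRen]
  exact imp_elim h

theorem foldr_and {ι : Type} (F : ι → Form L) (l : List ι)
    (h : ∀ i ∈ l, ProvableIn rs T 0 {F i}) :
    ProvableIn rs T Γ (l.foldr (fun i C => .and (F i) C) .top ::ₘ Δ) := by
  induction l with
  | nil => exact .topR
  | cons i l ih =>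
    exact .andR (.of_singleton (h i List.mem_cons_self))
      (ih fun j hj => h j (List.mem_cons_of_mem _ hj))

theorem subst_imp_of_univClosure_mem (h : univClosure (X.imp Y) ∈ T) (σ : Subst L) :
    ProvableIn rs T 0 {(X.subst σ).imp (Y.subst σ)} :=
  impR (useAx h (univClosure_left σ (impL refl refl)))

end ProvableIn

def listSubst {s : L.Sorts} (ts : List (Term L s)) : Subst L :=
  fun s' n => if h : s = s' ∧ n < ts.length then h.1 ▸ ts[n]'h.2 else .var n

theorem listSubst_apply {s : L.Sorts} (ts : List (Term L s)) (n : ℕ) (hn : n < ts.length) :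
    listSubst ts s n = ts[n] := by
  simp [listSubst, hn]

/-- The substitution sending the variables `2i` and `2i+1` to `a i` and `b i`. -/
def pairSubst (l : List L.Sorts) (a b : (i : Fin l.length) → Term L (l.get i)) : Subst L :=
  fun s n =>
    if h : n / 2 < l.length then
      if h2 : l.get ⟨n / 2, h⟩ = s then
        if n % 2 = 0 then h2 ▸ a ⟨n / 2, h⟩ else h2 ▸ b ⟨n / 2, h⟩
      else .var n
    else .var n

theorem pairSubst_two_mul (l : List L.Sorts) (a b : (i : Fin l.length) → Term L (l.get i))
    (i : Fin l.length) : pairSubst l a b (l.get i) (2 * i.val) = a i := by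
  have e : 2 * i.val / 2 = i.val := by omega
  have h : 2 * i.val / 2 < l.length := by rw [e]; exact i.isLt
  unfold pairSubst
  rw [dif_pos h]
  generalize hj : (⟨2 * i.val / 2, h⟩ : Fin l.length) = j
  obtain rfl : j = i := hj.symm.trans (Fin.ext e)
  rw [dif_pos rfl, if_pos (by omega)]

theorem pairSubst_two_mul_add_one (l : List L.Sorts)
    (a b : (i : Fin l.length) → Term L (l.get i)) (i : Fin l.length) :
    pairSubst l a b (l.get i) (2 * i.val + 1) = b i := by
  have e : (2 * i.val + 1) / 2 = i.val := by omega
  have h : (2 * i.val + 1) / 2 < l.length := by rw [e]; exact i.isLt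
  unfold pairSubst
  rw [dif_pos h]
  generalize hj : (⟨(2 * i.val + 1) / 2, h⟩ : Fin l.length) = j
  obtain rfl : j = i := hj.symm.trans (Fin.ext e)
  rw [dif_pos rfl, if_neg (by omega)]

section Equality

variable {L0 : Language}

theorem eqForm_subst (σ : Subst (withEq L0)) {s : (withEq L0).Sorts} (t u : Term (withEq L0) s) :
    Form.subst σ (eqForm t u) = eqForm (Term.subst σ s t) (Term.subst σ s u) := by
  simp only [eqForm, Form.subst]
  congr 1
  funext i
  match i with
  | ⟨0, _⟩ | ⟨1, _⟩ => rfl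

theorem RwPos.eqForm_right {rs : PRS (withEq L0)} {s : (withEq L0).Sorts}
    {a b b' : Term (withEq L0) s}
    (h : EqE rs s b b') : RwPos rs (eqForm a b) (eqForm a b') :=
  .predArg (L := withEq L0) (.inr s) (args2 a b) (args2 a b') ⟨1, Nat.one_lt_two⟩ h
    fun j hj => match j with
      | ⟨0, _⟩ => rfl
      | ⟨1, _⟩ => absurd rfl hj

theorem subst_pairSubst_foldr_eqForm (l : List L0.Sorts)
    (a b : (i : Fin l.length) → Term (withEq L0) (l.get i)) (is : List (Fin l.length)) :
    Form.subst (pairSubst (L := withEq L0) l a b)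
      (is.foldr (fun i C =>
        .and (eqForm (s := l.get i) (.var (2 * i.val)) (.var (2 * i.val + 1))) C) .top) =
    is.foldr (fun i C => .and (eqForm (a i) (b i)) C) .top := by
  induction is with
  | nil => rfl
  | cons i is ih =>
    rw [List.foldr_cons, Form.subst, ih]
    erw [eqForm_subst]
    exact congrArg (Form.and · _) (congrArg₂ eqForm (pairSubst_two_mul (L := withEq L0) l a b i)
      (pairSubst_two_mul_add_one (L := withEq L0) l a b i))

variable {rs : PRS (withEq L0)} {T : Set (Form (withEq L0))} {s : (withEq L0).Sorts}

theorem ProvableIn.eqForm_refl (hT : EqAxioms L0 ⊆ T) (t : Term (withEq L0) s) :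
    ProvableIn rs T 0 {eqForm t t} := by
  refine .useAx (hT (.inl (.inl (.inl (.inl ⟨s, rfl⟩))))) (.univClosure_left (listSubst [t]) ?_)
  simpa [eqForm_subst, Term.subst, listSubst_apply] using
    (refl : ProvableIn rs T {eqForm t t} {eqForm t t})

theorem ProvableIn.eqForm_symm (hT : EqAxioms L0 ⊆ T) {t u : Term (withEq L0) s}
    (h : ProvableIn rs T 0 {eqForm t u}) : ProvableIn rs T 0 {eqForm u t} := by
  refine .useAx (hT (.inl (.inl (.inl (.inr ⟨s, rfl⟩)))))
    (.univClosure_left (listSubst [t, u]) ?_)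
  simpa [Form.subst, eqForm_subst, Term.subst, listSubst_apply] using
    (impL (of_singleton h) refl : ProvableIn rs T {(eqForm t u).imp (eqForm u t)} {eqForm u t})

theorem ProvableIn.eqForm_trans (hT : EqAxioms L0 ⊆ T) {t u v : Term (withEq L0) s}
    (h₁ : ProvableIn rs T 0 {eqForm t u}) (h₂ : ProvableIn rs T 0 {eqForm u v}) :
    ProvableIn rs T 0 {eqForm t v} := by
  refine .useAx (hT (.inl (.inl (.inr ⟨s, rfl⟩)))) (.univClosure_left (listSubst [t, u, v]) ?_)
  simpa [Form.subst, eqForm_subst, Term.subst, listSubst_apply] using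
    (impL (andR (of_singleton h₁) (of_singleton h₂)) refl :
      ProvableIn rs T {((eqForm t u).and (eqForm u v)).imp (eqForm t v)} {eqForm t v})

theorem ProvableIn.eqForm_func (hT : EqAxioms L0 ⊆ T) (f : (withEq L0).Func)
    {a b : (i : Fin ((withEq L0).arity f).length) →
      Term (withEq L0) (((withEq L0).arity f).get i)}
    (h : ∀ i, ProvableIn rs T 0 {eqForm (a i) (b i)}) :
    ProvableIn rs T 0 {eqForm (Term.func f a) (Term.func f b)} := by
  set σ := pairSubst (L := withEq L0) ((withEq L0).arity f) a b
  refine .useAx (hT (.inl (.inr ⟨f, rfl⟩))) (.univClosure_left σ ?_)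
  have ha : Term.subst σ _ (Term.func f fun i => .var (2 * i.val)) = Term.func f a :=
    congrArg _ (funext fun i => pairSubst_two_mul _ a b i)
  have hb : Term.subst σ _ (Term.func f fun i => .var (2 * i.val + 1)) = Term.func f b :=
    congrArg _ (funext fun i => pairSubst_two_mul_add_one _ a b i)
  rw [Form.subst]
  unfold congrHypF
  erw [subst_pairSubst_foldr_eqForm, eqForm_subst, ha, hb]
  exact impL (foldr_and _ _ fun i _ => h i) refl

theorem ProvableIn.pred_imp_pred (hT : EqAxioms L0 ⊆ T) (p : (withEq L0).Pred)
    {a b : (i : Fin ((withEq L0).parity p).length) →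
      Term (withEq L0) (((withEq L0).parity p).get i)}
    (h : ∀ i, ProvableIn rs T 0 {eqForm (a i) (b i)}) :
    ProvableIn rs T 0 {(Form.pred p a).imp (Form.pred p b)} := by
  set σ := pairSubst (L := withEq L0) ((withEq L0).parity p) a b
  refine impR (.useAx (hT (.inr ⟨p, rfl⟩)) (.univClosure_left σ ?_))
  have ha : Form.subst σ (Form.pred p fun i => .var (2 * i.val)) = Form.pred p a :=
    congrArg _ (funext fun i => pairSubst_two_mul _ a b i)
  have hb : Form.subst σ (Form.pred p fun i => .var (2 * i.val + 1)) = Form.pred p b :=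
    congrArg _ (funext fun i => pairSubst_two_mul_add_one _ a b i)
  rw [Form.subst, Form.subst, congrHypP, ha, hb]
  erw [subst_pairSubst_foldr_eqForm]
  exact impL (foldr_and _ _ fun i _ => h i) (impL refl refl)

theorem ProvableIn.eqForm_of_eqE (hT : EqAxioms L0 ⊆ T) {R : PRS (withEq L0)}
    (hR : ∀ s t u, R.eqns s t u → univClosure (eqForm t u) ∈ T) {t u : Term (withEq L0) s}
    (h : EqE R s t u) : ProvableIn rs T 0 {eqForm t u} := by
  induction h with
  | base σ hr =>
    exact .useAx (hR _ _ _ hr) (.univClosure_left σ (by rw [eqForm_subst]; exact refl))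
  | refl t => exact eqForm_refl hT t
  | symm _ ih => exact ih.eqForm_symm hT
  | trans _ _ ih₁ ih₂ => exact ih₁.eqForm_trans hT ih₂
  | congr f _ ih => exact eqForm_func hT f ih

end Equality

theorem EqE.of_eq_of_ne {R : PRS L} {l : List L.Sorts}
    {a a' : (i : Fin l.length) → Term L (l.get i)} {i : Fin l.length}
    (hi : EqE R _ (a i) (a' i)) (hj : ∀ j, j ≠ i → a j = a' j) (j : Fin l.length) :
    EqE R _ (a j) (a' j) := by
  by_cases hji : j = i
  · subst hji; exact hi
  · rw [hj j hji]; exact .refl _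

section URset

variable {L0 : Language} {rs : PRS (withEq L0)}

theorem EqAxioms_subset_URset : EqAxioms L0 ⊆ URset rs :=
  fun _ h => .inl (.inl (.inl h))

theorem shift_of_mem_URset {C : Form (withEq L0)} (hC : C ∈ URset rs) (s : (withEq L0).Sorts) :
    Form.shift s C = C := by
  rcases hC with ((((((⟨_, rfl⟩ | ⟨_, rfl⟩) | ⟨_, rfl⟩) | ⟨_, rfl⟩) | ⟨_, rfl⟩) |
    ⟨_, _, _, _, rfl⟩) | ⟨_, _, _, rfl⟩) | ⟨_, _, _, rfl⟩ <;>
  exact shift_univClosure s _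

theorem ProvableIn.eqForm_of_eqE_URset {s : (withEq L0).Sorts} {t u : Term (withEq L0) s}
    (h : EqE rs s t u) : ProvableIn (emptyPRS _) (URset rs) 0 {eqForm t u} :=
  .eqForm_of_eqE EqAxioms_subset_URset (fun s t u hr => .inl (.inl (.inr ⟨s, t, u, hr, rfl⟩))) h

mutual

theorem RwNeg.provableIn_URset {A B : Form (withEq L0)} :
    RwNeg rs A B → ProvableIn (emptyPRS _) (URset rs) 0 {A.imp B}
  | .predArg p _ _ _ hi hj => .pred_imp_pred EqAxioms_subset_URset p fun j =>
      .eqForm_of_eqE_URset (hi.of_eq_of_ne hj j)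
  | .rule σ h => .subst_imp_of_univClosure_mem (.inl (.inr ⟨_, _, h, rfl⟩)) σ
  | .notC h => .not_anti (RwPos.provableIn_URset h)
  | .andL h => .and_mono_left (RwNeg.provableIn_URset h)
  | .andR h => .and_mono_right (RwNeg.provableIn_URset h)
  | .orL h => .or_mono_left (RwNeg.provableIn_URset h)
  | .orR h => .or_mono_right (RwNeg.provableIn_URset h)
  | .impL h => .imp_anti_left (RwPos.provableIn_URset h)
  | .impR h => .imp_mono_right (RwNeg.provableIn_URset h)
  | .allC h => .all_mono (fun _ hC => shift_of_mem_URset hC) (RwNeg.provableIn_URset h)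
  | .exC h => .ex_mono (fun _ hC => shift_of_mem_URset hC) (RwNeg.provableIn_URset h)

theorem RwPos.provableIn_URset {A B : Form (withEq L0)} :
    RwPos rs A B → ProvableIn (emptyPRS _) (URset rs) 0 {B.imp A}
  | .predArg p _ _ _ hi hj => .pred_imp_pred EqAxioms_subset_URset p fun j =>
      .eqForm_of_eqE_URset (hi.of_eq_of_ne hj j).symm
  | .rule σ h => .subst_imp_of_univClosure_mem (.inr ⟨_, _, h, rfl⟩) σ
  | .notC h => .not_anti (RwNeg.provableIn_URset h)
  | .andL h => .and_mono_left (RwPos.provableIn_URset h)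
  | .andR h => .and_mono_right (RwPos.provableIn_URset h)
  | .orL h => .or_mono_left (RwPos.provableIn_URset h)
  | .orR h => .or_mono_right (RwPos.provableIn_URset h)
  | .impL h => .imp_anti_left (RwNeg.provableIn_URset h)
  | .impR h => .imp_mono_right (RwPos.provableIn_URset h)
  | .allC h => .all_mono (fun _ hC => shift_of_mem_URset hC) (RwPos.provableIn_URset h)
  | .exC h => .ex_mono (fun _ hC => shift_of_mem_URset hC) (RwPos.provableIn_URset h)

end

theorem RwNegS.provableIn_URset {A B : Form (withEq L0)} (h : RwNegS rs A B) :
    ProvableIn (emptyPRS _) (URset rs) 0 {A.imp B} := by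
  induction h with
  | refl => exact .imp_refl
  | tail _ hBC ih => exact ih.imp_trans hBC.provableIn_URset

theorem RwPosS.provableIn_URset {A B : Form (withEq L0)} (h : RwPosS rs A B) :
    ProvableIn (emptyPRS _) (URset rs) 0 {B.imp A} := by
  induction h with
  | refl => exact .imp_refl
  | tail _ hBC ih => exact hBC.provableIn_URset.imp_trans ih

theorem ProvableIn.univClosure_eqForm_of_eqns {s : (withEq L0).Sorts} {t u : Term (withEq L0) s}
    (h : rs.eqns s t u) : ProvableIn rs (EqAxioms L0) 0 {univClosure (eqForm t u)} := by
  have hrefl : univClosure (eqForm (L := L0) (s := s) (.var 0) (.var 0)) ∈ EqAxioms L0 :=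
    .inl (.inl (.inl (.inl ⟨s, rfl⟩)))
  refine .useAx hrefl (.of_provable (.univClosure_right (by simp [shift_univClosure]) fun σ => ?_))
  refine .univClosure_left (listSubst [Term.subst σ s t]) ?_
  simpa [eqForm_subst, Term.subst, listSubst_apply] using
    (Provable.of_rwNegS_rwPosS .refl (.single (RwPos.eqForm_right (EqE.base σ h).symm)) :
      Provable rs {eqForm (Term.subst σ s t) (Term.subst σ s t)}
        {eqForm (Term.subst σ s t) (Term.subst σ s u)})

end URset

/-- For a language `L` containing an equality predicate in
each sort and a polarized rewrite system `R` in `L`, the theory `⟨R, Eq⟩`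
(`Eq` being the axioms of equality of `L`) is compatible with the set of
axioms `U_R`. -/
theorem compatible_URset (L0 : Language) (rs : PRS (withEq L0)) :
    Compatible rs (EqAxioms L0) (URset rs) where
  rwNeg _ _ h := h.provableIn_URset
  rwPos _ _ h := h.provableIn_URset
  axT _ hA := .useAx (EqAxioms_subset_URset hA) .refl
  axU := by
    rintro _ (((hEq | ⟨s, t, u, h, rfl⟩) | ⟨P, A, h, rfl⟩) | ⟨P, A, h, rfl⟩)
    · exact .useAx hEq .refl
    · exact .univClosure_eqForm_of_eqns h
    · exact .of_provable (.univClosure_imp fun σ =>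
        .of_rwNegS_rwPosS (.single (.rule σ h)) .refl)
    · exact .of_provable (.univClosure_imp fun σ =>
        .of_rwNegS_rwPosS .refl (.single (.rule σ h)))

end
end PDM
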